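/- arXiv:1809.01218 — 3 statements merged into one kernel-verified Lean document; each statement's English description precedes it below -/
import Mathlib

section
/- Let g = (g_1, ..., g_l) be polynomials in x ∈ ℝ^n and let G(x) be the (n+l)×l matrix polynomial whose i-th column is the vector (∇g_i(x); g_i(x)·e_i), i.e. the first n rows of G(x) are the gradients ∇g_1(x), ..., ∇g_l(x) and the last l rows form the diagonal matrix diag(g_1(x), ..., g_l(x)). Suppose there is an l×(n+l) matrix polynomial G_1(x) such that G_1(x)G(x) = I_l for all x. If at a point x* ∈ ℝ^n a vector λ ∈ ℝ^l and a vector v ∈ ℝ^n satisfy v = λ_1∇g_1(x*) + ... + λ_l∇g_l(x*) and λ_i·g_i(x*) = 0 for every i = 1, ..., l, then λ = G_1(x*)_{:,1:n}·v, i.e. each λ_i equals the product of the i-th row of the submatrix of G_1(x*) consisting of its first n columns with the vector v. -/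
/-!
`G(x*) λ = (v; 0)`: the gradient block gives `Σ λ_i ∇g_i(x*) = v` and the diagonal block gives
the complementarity products `λ_i g_i(x*) = 0`. Multiplying by the left inverse `G₁(x*)` recovers
`λ`, and only the first `n` columns of `G₁(x*)` meet the nonzero part of `(v; 0)`.
-/

open MvPolynomial

/-- The matrix `G(x)`: its `i`-th column is `(∇g_i(x); g_i(x)·e_i)`, i.e. the first `n`
rows are the gradients `∇g_1(x), ..., ∇g_l(x)` and the last `l` rows form
`diag(g_1(x), ..., g_l(x))`. -/
noncomputable def Gmat {n l : ℕ} (g : Fin l → MvPolynomial (Fin n) ℝ) (x : Fin n → ℝ) :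
    Matrix (Fin n ⊕ Fin l) (Fin l) ℝ :=
  Matrix.of fun r c =>
    match r with
    | Sum.inl i => eval x (pderiv i (g c))
    | Sum.inr i => if i = c then eval x (g c) else 0

namespace Matrix

variable {R m n k : Type*} [CommSemiring R] [Fintype m] [Fintype n]

theorem eq_mulVec_mulVec_of_mul_eq_one [Fintype k] [DecidableEq k]
    {A : Matrix k m R} {B : Matrix m k R} (hAB : A * B = 1) (x : k → R) : x = A *ᵥ (B *ᵥ x) := by
  rw [mulVec_mulVec, hAB, one_mulVec]

theorem mulVec_sumElim_zero_apply (A : Matrix k (n ⊕ m) R) (v : n → R) (i : k) :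
    (A *ᵥ Sum.elim v 0) i = ∑ j, A i (Sum.inl j) * v j := by
  simp [mulVec, dotProduct, Fintype.sum_sum_type]

end Matrix

open Matrix

theorem Gmat_mulVec_eq_sumElim {n l : ℕ} (g : Fin l → MvPolynomial (Fin n) ℝ)
    (x : Fin n → ℝ) (lam : Fin l → ℝ) (v : Fin n → ℝ)
    (hv : ∀ j : Fin n, v j = ∑ i, lam i * eval x (pderiv j (g i)))
    (hcomp : ∀ i, lam i * eval x (g i) = 0) :
    Gmat g x *ᵥ lam = Sum.elim v 0 := by
  funext r
  rcases r with j | i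
  · simp [Gmat, mulVec, dotProduct, hv j, mul_comm]
  · simpa [Gmat, mulVec, dotProduct, mul_comm] using hcomp i

/-- If `G₁(x) G(x) = I_l` for all `x`, and at a point `x*` a vector `λ` and a vector `v`
satisfy `v = Σ λ_i ∇g_i(x*)` and `λ_i g_i(x*) = 0` for all `i`, then
`λ = G₁(x*)_{:,1:n} v`. -/
theorem stmt0 {n l : ℕ} (g : Fin l → MvPolynomial (Fin n) ℝ)
    (G1 : Matrix (Fin l) (Fin n ⊕ Fin l) (MvPolynomial (Fin n) ℝ))
    (hG1 : ∀ x : Fin n → ℝ, (Matrix.of fun i j => eval x (G1 i j)) * Gmat g x = 1)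
    (xstar : Fin n → ℝ) (lam : Fin l → ℝ) (v : Fin n → ℝ)
    (hv : ∀ j : Fin n, v j = ∑ i, lam i * eval xstar (pderiv j (g i)))
    (hcomp : ∀ i, lam i * eval xstar (g i) = 0) :
    ∀ i, lam i = ∑ j : Fin n, eval xstar (G1 i (Sum.inl j)) * v j := by
  intro i
  have hlam := eq_mulVec_mulVec_of_mul_eq_one (hG1 xstar) lam
  rw [Gmat_mulVec_eq_sumElim g xstar lam v hv hcomp] at hlam
  rw [congrFun hlam i, mulVec_sumElim_zero_apply]
  rfl
end

section
/- Let X = {x ∈ ℝ^n : g_i(x) = 0 (i ∈ E1X), g_i(x) ≥ 0 (i ∈ E2X)} and Y = {y ∈ ℝ^m : h_j(y) = 0 (j ∈ E1Y), h_j(y) ≥ 0 (j ∈ E2Y)}, where g = (g_1,...,g_{l1}) and h = (h_1,...,h_{l2}) are polynomial tuples. Suppose there are matrix polynomials G_1(x), H_1(y) with G_1(x)G(x) = I_{l1} for all x and H_1(y)H(y) = I_{l2} for all y, and define the Lagrange polynomial tuples λ(x,y) := G_1(x)_{:,1:n} ∇_x F(x,y) and μ(x,y) := H_1(y)_{:,1:m}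 ∇_y F(x,y). If (x*, y*) is a saddle point of F over X×Y and there exist vectors λ ∈ ℝ^{l1}, μ ∈ ℝ^{l2} satisfying the first-order conditions ∇_x F(x*,y*) = Σ_{i} λ_i ∇g_i(x*) with λ_i ≥ 0 and λ_i g_i(x*) = 0 for i ∈ E2X, and ∇_y F(x*,y*) = Σ_{j} μ_j ∇h_j(y*) with μ_j ≤ 0 and μ_j h_j(y*) = 0 for j ∈ E2Y, then λ = λ(x*,y*), μ = μ(x*,y*), and (x*,y*) solves the polynomial system: g_i(x*) = 0 (i ∈ E1X), h_j(y*) = 0 (j ∈ E1Y), ∇_x F(x*,y*) = Σ_i λ_i(x*,y*)∇g_i(x*), ∇_y F(x*,y*) = Σ_j μ_j(x*,y*)∇h_j(y*), 0 ≤ λ_i(x*,y*) ⊥ g_i(x*) ≥ 0 (i ∈ E2X), 0 ≥ μ_j(x*,y*) ⊥ h_j(y*) ≥ 0 (j ∈ E2Y). -/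
/-!
The multipliers are determined by the first-order conditions alone: complementarity
`λᵢ gᵢ(x*) = 0` for every `i` says exactly that `G(x*) λ = (∇ₓF(x*,y*); 0)`, and applying the
left inverse `G₁(x*)` gives `λ = G₁(x*)_{:,1:n} ∇ₓF(x*,y*) = λ(x*,y*)`; likewise for `μ`.
Every remaining equation of the system is then a first-order condition with `λ(x*,y*)` in
place of `λ`.
-/

open MvPolynomial

/-- The semialgebraic set `{x : gᵢ(x) = 0 (i ∈ E1), gᵢ(x) ≥ 0 (i ∈ E2)}`. -/
def SemiSet {n l : ℕ} (E1 E2 : Finset (Fin l)) (g : Fin l → MvPolynomial (Fin n) ℝ) :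
    Set (Fin n → ℝ) :=
  {x | (∀ i ∈ E1, eval x (g i) = 0) ∧ ∀ i ∈ E2, 0 ≤ eval x (g i)}

/-- The Lagrange polynomial tuple `λ(x,y) := G₁(x)_{:,1:n} ∇ₓ F(x,y)`. -/
noncomputable def lagX {n m l1 : ℕ} (G1 : Matrix (Fin l1) (Fin n ⊕ Fin l1) (MvPolynomial (Fin n) ℝ))
    (F : MvPolynomial (Fin n ⊕ Fin m) ℝ) (i : Fin l1) : MvPolynomial (Fin n ⊕ Fin m) ℝ :=
  ∑ j : Fin n, rename Sum.inl (G1 i (Sum.inl j)) * pderiv (Sum.inl j) F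

/-- The Lagrange polynomial tuple `μ(x,y) := H₁(y)_{:,1:m} ∇_y F(x,y)`. -/
noncomputable def lagY {n m l2 : ℕ} (H1 : Matrix (Fin l2) (Fin m ⊕ Fin l2) (MvPolynomial (Fin m) ℝ))
    (F : MvPolynomial (Fin n ⊕ Fin m) ℝ) (j : Fin l2) : MvPolynomial (Fin n ⊕ Fin m) ℝ :=
  ∑ j' : Fin m, rename Sum.inr (H1 j (Sum.inl j')) * pderiv (Sum.inr j') F

open Matrix

theorem Gmat_mulVec {n l : ℕ} (g : Fin l → MvPolynomial (Fin n) ℝ) (x : Fin n → ℝ)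
    (lam : Fin l → ℝ) :
    Gmat g x *ᵥ lam = Sum.elim (fun j => ∑ i, lam i * eval x (pderiv j (g i)))
      (fun i => lam i * eval x (g i)) := by
  funext r
  cases r with
  | inl j => simp only [mulVec, dotProduct, Gmat, of_apply, Sum.elim_inl, mul_comm]
  | inr i => simp [mulVec, dotProduct, Gmat, mul_comm (eval x (g i))]

theorem mul_eval_eq_zero_of_mem_semiSet {n l : ℕ} {E1 E2 : Finset (Fin l)}
    (hu : E1 ∪ E2 = Finset.univ) {g : Fin l → MvPolynomial (Fin n) ℝ} {x : Fin n → ℝ}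
    (hx : x ∈ SemiSet E1 E2 g) {lam : Fin l → ℝ} (hc : ∀ i ∈ E2, lam i * eval x (g i) = 0)
    (i : Fin l) : lam i * eval x (g i) = 0 := by
  rcases Finset.mem_union.mp (hu ▸ Finset.mem_univ i) with h1 | h2
  · rw [hx.1 i h1, mul_zero]
  · exact hc i h2

theorem multiplier_eq_leftInverse_mulVec_gradient {n l : ℕ}
    {g : Fin l → MvPolynomial (Fin n) ℝ} {G1 : Matrix (Fin l) (Fin n ⊕ Fin l) (MvPolynomial (Fin n) ℝ)}
    {x : Fin n → ℝ} (hG1 : (Matrix.of fun i j => eval x (G1 i j)) * Gmat g x = 1)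
    {lam : Fin l → ℝ} (hc : ∀ i, lam i * eval x (g i) = 0)
    {d : Fin n → ℝ} (hd : ∀ j, d j = ∑ i, lam i * eval x (pderiv j (g i))) (i : Fin l) :
    lam i = ∑ j, eval x (G1 i (Sum.inl j)) * d j := by
  have hG : Gmat g x *ᵥ lam = Sum.elim d 0 := by
    rw [Gmat_mulVec]
    congr 1 <;> funext <;> simp [hd, hc]
  calc lam i = (((Matrix.of fun i j => eval x (G1 i j)) * Gmat g x) *ᵥ lam) i := by
        rw [hG1, one_mulVec]
    _ = ∑ j, eval x (G1 i (Sum.inl j)) * d j := by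
        rw [← mulVec_mulVec, hG]
        simp [mulVec, dotProduct, Fintype.sum_sum_type]

theorem eval_lagX {n m l1 : ℕ} (G1 : Matrix (Fin l1) (Fin n ⊕ Fin l1) (MvPolynomial (Fin n) ℝ))
    (F : MvPolynomial (Fin n ⊕ Fin m) ℝ) (xs : Fin n → ℝ) (ys : Fin m → ℝ) (i : Fin l1) :
    eval (Sum.elim xs ys) (lagX G1 F i) =
      ∑ j, eval xs (G1 i (Sum.inl j)) * eval (Sum.elim xs ys) (pderiv (Sum.inl j) F) := by
  simp [lagX, eval_rename, Function.comp_def]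

theorem eval_lagY {n m l2 : ℕ} (H1 : Matrix (Fin l2) (Fin m ⊕ Fin l2) (MvPolynomial (Fin m) ℝ))
    (F : MvPolynomial (Fin n ⊕ Fin m) ℝ) (xs : Fin n → ℝ) (ys : Fin m → ℝ) (j : Fin l2) :
    eval (Sum.elim xs ys) (lagY H1 F j) =
      ∑ j', eval ys (H1 j (Sum.inl j')) * eval (Sum.elim xs ys) (pderiv (Sum.inr j') F) := by
  simp [lagY, eval_rename, Function.comp_def]

theorem stmt1_general {n m l1 l2 : ℕ}
    (E1X E2X : Finset (Fin l1)) (hXu : E1X ∪ E2X = Finset.univ)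
    (E1Y E2Y : Finset (Fin l2)) (hYu : E1Y ∪ E2Y = Finset.univ)
    (g : Fin l1 → MvPolynomial (Fin n) ℝ) (h : Fin l2 → MvPolynomial (Fin m) ℝ)
    (F : MvPolynomial (Fin n ⊕ Fin m) ℝ)
    (G1 : Matrix (Fin l1) (Fin n ⊕ Fin l1) (MvPolynomial (Fin n) ℝ))
    (H1 : Matrix (Fin l2) (Fin m ⊕ Fin l2) (MvPolynomial (Fin m) ℝ))
    (hG1 : ∀ x : Fin n → ℝ, (Matrix.of fun i j => eval x (G1 i j)) * Gmat g x = 1)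
    (hH1 : ∀ y : Fin m → ℝ, (Matrix.of fun i j => eval y (H1 i j)) * Gmat h y = 1)
    (xs : Fin n → ℝ) (ys : Fin m → ℝ)
    (hxX : xs ∈ SemiSet E1X E2X g) (hyY : ys ∈ SemiSet E1Y E2Y h)
    (lam : Fin l1 → ℝ) (mu : Fin l2 → ℝ)
    -- first-order conditions: `∇ₓF(x*,y*) = Σᵢ λᵢ ∇gᵢ(x*)`, `0 ≤ λᵢ ⊥ gᵢ(x*)` on E2X
    (hlg : ∀ j : Fin n, eval (Sum.elim xs ys) (pderiv (Sum.inl j) F) =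
      ∑ i, lam i * eval xs (pderiv j (g i)))
    (hlc : ∀ i ∈ E2X, 0 ≤ lam i ∧ lam i * eval xs (g i) = 0)
    -- `∇_yF(x*,y*) = Σⱼ μⱼ ∇hⱼ(y*)`, `0 ≥ μⱼ ⊥ hⱼ(y*)` on E2Y
    (hmg : ∀ j' : Fin m, eval (Sum.elim xs ys) (pderiv (Sum.inr j') F) =
      ∑ j, mu j * eval ys (pderiv j' (h j)))
    (hmc : ∀ j ∈ E2Y, mu j ≤ 0 ∧ mu j * eval ys (h j) = 0) :
    (∀ i, lam i = eval (Sum.elim xs ys) (lagX G1 F i)) ∧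
    (∀ j, mu j = eval (Sum.elim xs ys) (lagY H1 F j)) ∧
    (∀ i ∈ E1X, eval xs (g i) = 0) ∧ (∀ j ∈ E1Y, eval ys (h j) = 0) ∧
    (∀ j : Fin n, eval (Sum.elim xs ys) (pderiv (Sum.inl j) F) =
      ∑ i, eval (Sum.elim xs ys) (lagX G1 F i) * eval xs (pderiv j (g i))) ∧
    (∀ j' : Fin m, eval (Sum.elim xs ys) (pderiv (Sum.inr j') F) =
      ∑ j, eval (Sum.elim xs ys) (lagY H1 F j) * eval ys (pderiv j' (h j))) ∧
    (∀ i ∈ E2X, 0 ≤ eval (Sum.elim xs ys) (lagX G1 F i) ∧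
      eval (Sum.elim xs ys) (lagX G1 F i) * eval xs (g i) = 0 ∧ 0 ≤ eval xs (g i)) ∧
    (∀ j ∈ E2Y, eval (Sum.elim xs ys) (lagY H1 F j) ≤ 0 ∧
      eval (Sum.elim xs ys) (lagY H1 F j) * eval ys (h j) = 0 ∧ 0 ≤ eval ys (h j)) := by
  have hlam : ∀ i, lam i = eval (Sum.elim xs ys) (lagX G1 F i) := fun i => by
    rw [eval_lagX]
    exact multiplier_eq_leftInverse_mulVec_gradient (hG1 xs)
      (mul_eval_eq_zero_of_mem_semiSet hXu hxX fun i hi => (hlc i hi).2) hlg i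
  have hmu : ∀ j, mu j = eval (Sum.elim xs ys) (lagY H1 F j) := fun j => by
    rw [eval_lagY]
    exact multiplier_eq_leftInverse_mulVec_gradient (hH1 ys)
      (mul_eval_eq_zero_of_mem_semiSet hYu hyY fun j hj => (hmc j hj).2) hmg j
  refine ⟨hlam, hmu, hxX.1, hyY.1, ?_⟩
  simp only [← hlam, ← hmu]
  exact ⟨hlg, hmg,
    fun i hi => ⟨(hlc i hi).1, (hlc i hi).2, hxX.2 i hi⟩,
    fun j hj => ⟨(hmc j hj).1, (hmc j hj).2, hyY.2 j hj⟩⟩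

/-- At a saddle point `(x*, y*)` admitting first-order Lagrange multipliers `λ, μ`,
the multipliers are given by the Lagrange polynomials, `λ = λ(x*,y*)` and
`μ = μ(x*,y*)`, and `(x*, y*)` solves the polynomial system (1.13). -/
theorem stmt1 {n m l1 l2 : ℕ}
    (E1X E2X : Finset (Fin l1)) (hXu : E1X ∪ E2X = Finset.univ) (hXd : Disjoint E1X E2X)
    (E1Y E2Y : Finset (Fin l2)) (hYu : E1Y ∪ E2Y = Finset.univ) (hYd : Disjoint E1Y E2Y)
    (g : Fin l1 → MvPolynomial (Fin n) ℝ) (h : Fin l2 → MvPolynomial (Fin m) ℝ)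
    (F : MvPolynomial (Fin n ⊕ Fin m) ℝ)
    (G1 : Matrix (Fin l1) (Fin n ⊕ Fin l1) (MvPolynomial (Fin n) ℝ))
    (H1 : Matrix (Fin l2) (Fin m ⊕ Fin l2) (MvPolynomial (Fin m) ℝ))
    (hG1 : ∀ x : Fin n → ℝ, (Matrix.of fun i j => eval x (G1 i j)) * Gmat g x = 1)
    (hH1 : ∀ y : Fin m → ℝ, (Matrix.of fun i j => eval y (H1 i j)) * Gmat h y = 1)
    (xs : Fin n → ℝ) (ys : Fin m → ℝ)
    (hxX : xs ∈ SemiSet E1X E2X g) (hyY : ys ∈ SemiSet E1Y E2Y h)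
    -- `(x*, y*)` is a saddle point of `F` over `X × Y`
    (hsaddle : (∀ x ∈ SemiSet E1X E2X g, eval (Sum.elim xs ys) F ≤ eval (Sum.elim x ys) F) ∧
      ∀ y ∈ SemiSet E1Y E2Y h, eval (Sum.elim xs y) F ≤ eval (Sum.elim xs ys) F)
    (lam : Fin l1 → ℝ) (mu : Fin l2 → ℝ)
    -- first-order conditions: `∇ₓF(x*,y*) = Σᵢ λᵢ ∇gᵢ(x*)`, `0 ≤ λᵢ ⊥ gᵢ(x*)` on E2X
    (hlg : ∀ j : Fin n, eval (Sum.elim xs ys) (pderiv (Sum.inl j) F) =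
      ∑ i, lam i * eval xs (pderiv j (g i)))
    (hlc : ∀ i ∈ E2X, 0 ≤ lam i ∧ lam i * eval xs (g i) = 0)
    -- `∇_yF(x*,y*) = Σⱼ μⱼ ∇hⱼ(y*)`, `0 ≥ μⱼ ⊥ hⱼ(y*)` on E2Y
    (hmg : ∀ j' : Fin m, eval (Sum.elim xs ys) (pderiv (Sum.inr j') F) =
      ∑ j, mu j * eval ys (pderiv j' (h j)))
    (hmc : ∀ j ∈ E2Y, mu j ≤ 0 ∧ mu j * eval ys (h j) = 0) :
    (∀ i, lam i = eval (Sum.elim xs ys) (lagX G1 F i)) ∧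
    (∀ j, mu j = eval (Sum.elim xs ys) (lagY H1 F j)) ∧
    (∀ i ∈ E1X, eval xs (g i) = 0) ∧ (∀ j ∈ E1Y, eval ys (h j) = 0) ∧
    (∀ j : Fin n, eval (Sum.elim xs ys) (pderiv (Sum.inl j) F) =
      ∑ i, eval (Sum.elim xs ys) (lagX G1 F i) * eval xs (pderiv j (g i))) ∧
    (∀ j' : Fin m, eval (Sum.elim xs ys) (pderiv (Sum.inr j') F) =
      ∑ j, eval (Sum.elim xs ys) (lagY H1 F j) * eval ys (pderiv j' (h j))) ∧
    (∀ i ∈ E2X, 0 ≤ eval (Sum.elim xs ys) (lagX G1 F i) ∧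
      eval (Sum.elim xs ys) (lagX G1 F i) * eval xs (g i) = 0 ∧ 0 ≤ eval xs (g i)) ∧
    (∀ j ∈ E2Y, eval (Sum.elim xs ys) (lagY H1 F j) ≤ 0 ∧
      eval (Sum.elim xs ys) (lagY H1 F j) * eval ys (h j) = 0 ∧ 0 ≤ eval ys (h j)) :=
  stmt1_general E1X E2X hXu E1Y E2Y hYu g h F G1 H1 hG1 hH1 xs ys hxX hyY lam mu hlg hlc hmg hmc
end

section
/- Let φ and ψ be tuples of real polynomials in N variables and F a real polynomial such that F attains only finitely many values c_1 < c_2 < ... < c_M on the real zero set V := {z ∈ ℝ^N : φ(z) = 0}. Suppose the problem min F(z) subject to φ(z) = 0, ψ(z) ≥ 0 is feasible with minimum value f* (so f* = c_ℓ for some ℓ) and has a finite set O of minimizers, each of which is an isolated point of the set {z ∈ ℝ^N : φ(z) = 0, F(z) = f*}. Then there exists a real polynomial q in N variables such that: (a) q(z) > 0 for every z feasible for the original problem (i.e. with φ(z) = 0, ψ(z) ≥ 0); (b) the minimum of F over the set {z : φ(z) = 0, q(z) ≥ 0} equals f*; and (c) the set of minimizers of F over {z : φ(z) = 0, q(z)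 ≥ 0} is exactly O. -/
/-!
Let `V = {φ = 0}` and `t = f*`. With `G = ∏_{c > t} (F - c)²` over the finitely many values
`c` of `F` on `V`, and `D = ∏_{u ∈ O} ‖z - u‖²`, the product `P = G D` vanishes on the feasible
set: there either `F > t`, so `G = 0`, or `F = t`, so `z ∈ O` and `D = 0`. On the remaining
part `B = {z ∈ V : F z ≤ t, z ∉ O}` of the sublevel set, `G` is bounded below by a positive
constant since it takes finitely many nonzero values there, and so is `D`: `B` is closed (the
points of `O` are isolated in the level set and `F` has finitely many values on `V`), `D` is
positive on `B` and tends to infinity. Hence `q = ε - P` for small `ε > 0` is positive on the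
feasible set and negative on `B`.
-/

open MvPolynomial
open Filter Set

theorem IsClosed.exists_pos_forall_le_of_cocompact {X : Type*} [TopologicalSpace X]
    {B : Set X} {d : X → ℝ} {c : ℝ} (hB : IsClosed B) (hd : Continuous d) (hc : 0 < c)
    (hcoer : ∀ᶠ z in cocompact X, c ≤ d z) (hpos : ∀ z ∈ B, 0 < d z) :
    ∃ δ > 0, ∀ z ∈ B, δ ≤ d z := by
  obtain ⟨K, hK, hKc⟩ := mem_cocompact.1 hcoer
  obtain ⟨a, ha, haK⟩ :=
    (hK.inter_left hB).exists_forall_le' hd.continuousOn fun z hz => hpos z hz.1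
  refine ⟨min a c, lt_min ha hc, fun z hz => ?_⟩
  by_cases hzK : z ∈ K
  · exact (min_le_left _ _).trans (haK z ⟨hz, hzK⟩)
  · exact (min_le_right _ _).trans (hKc hzK)

theorem IsClosed.sdiff_of_forall_inter_eq_singleton {X : Type*} [TopologicalSpace X]
    {S O : Set X} (hS : IsClosed S) (hiso : ∀ u ∈ O, ∃ U, IsOpen U ∧ u ∈ U ∧ U ∩ S = {u}) :
    IsClosed (S \ O) := by
  choose U hU_open hU_mem hU_inter using hiso
  convert hS.sdiff (isOpen_iUnion fun u => isOpen_iUnion (hU_open u)) using 1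
  ext z
  constructor
  · rintro ⟨hzS, hzO⟩
    refine ⟨hzS, fun hzU => ?_⟩
    obtain ⟨u, hu, hzu⟩ := mem_iUnion₂.1 hzU
    have hz : z ∈ U u hu ∩ S := ⟨hzu, hzS⟩
    rw [hU_inter, mem_singleton_iff] at hz
    exact hzO (hz ▸ hu)
  · rintro ⟨hzS, hzU⟩
    exact ⟨hzS, fun hzO => hzU (mem_iUnion₂.2 ⟨z, hzO, hU_mem z hzO⟩)⟩

theorem isClosed_setOf_le_and_notMem {X : Type*} [TopologicalSpace X] {V O : Set X}
    {f : X → ℝ} {t : ℝ} (hV : IsClosed V) (hf : Continuous f) (hvals : (f '' V).Finite)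
    (hiso : ∀ u ∈ O, ∃ U, IsOpen U ∧ u ∈ U ∧ U ∩ {z | z ∈ V ∧ f z = t} = {u}) :
    IsClosed {z | z ∈ V ∧ f z ≤ t ∧ z ∉ O} := by
  have hO : ∀ u ∈ O, f u = t := fun u hu => by
    obtain ⟨U, -, huU, hU⟩ := hiso u hu
    have hu' : u ∈ U ∩ {z | z ∈ V ∧ f z = t} := hU ▸ mem_singleton u
    exact hu'.2.2
  -- below the level `t` the set is a finite union of closed level sets of `f` on `V`
  have hlt : IsClosed (V ∩ f ⁻¹' (f '' V ∩ Iio t)) :=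
    hV.inter ((hvals.subset inter_subset_left).isClosed.preimage hf)
  have hL : IsClosed {z | z ∈ V ∧ f z = t} := hV.inter (isClosed_eq hf continuous_const)
  convert hlt.union (hL.sdiff_of_forall_inter_eq_singleton hiso) using 1
  ext z
  constructor
  · rintro ⟨hzV, hle, hzO⟩
    rcases hle.lt_or_eq with hlt | heq
    · exact Or.inl ⟨hzV, mem_image_of_mem f hzV, hlt⟩
    · exact Or.inr ⟨⟨hzV, heq⟩, hzO⟩
  · rintro (⟨hzV, -, hlt⟩ | ⟨⟨hzV, heq⟩, hzO⟩)
    · exact ⟨hzV, hlt.le, fun hzO => hlt.ne (hO z hzO)⟩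
    · exact ⟨hzV, heq.le, hzO⟩

theorem dist_sq_le_sum_sq_sub {σ : Type*} [Fintype σ] (z u : σ → ℝ) :
    dist z u ^ 2 ≤ ∑ j, (z j - u j) ^ 2 := by
  have hS : 0 ≤ ∑ j, (z j - u j) ^ 2 := Finset.sum_nonneg fun j _ => sq_nonneg _
  refine (Real.le_sqrt dist_nonneg hS).1 ((dist_pi_le_iff (Real.sqrt_nonneg _)).2 fun j => ?_)
  rw [Real.dist_eq]
  exact Real.abs_le_sqrt (Finset.single_le_sum (fun j _ => sq_nonneg (z j - u j))
    (Finset.mem_univ j))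

namespace MvPolynomial

variable {σ : Type*}

theorem exists_eval_eq_zero_of_lt_and_pos_lower_bound_of_le {V : Set (σ → ℝ)}
    {F : MvPolynomial σ ℝ} (hvals : ((fun z => eval z F) '' V).Finite) (t : ℝ) :
    ∃ G : MvPolynomial σ ℝ, (∀ z ∈ V, t < eval z F → eval z G = 0) ∧
      ∃ m > 0, ∀ z ∈ V, eval z F ≤ t → m ≤ eval z G := by
  classical
  let T := {c ∈ hvals.toFinset | t < c}
  have heval : ∀ z, eval z (∏ c ∈ T, (F - C c) ^ 2) = ∏ c ∈ T, (eval z F - c) ^ 2 := by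
    simp
  refine ⟨∏ c ∈ T, (F - C c) ^ 2, fun z hz hlt => ?_, ?_⟩
  · rw [heval]
    exact Finset.prod_eq_zero (Finset.mem_filter.2 ⟨hvals.mem_toFinset.2 ⟨z, hz, rfl⟩, hlt⟩)
      (by rw [sub_self, zero_pow two_ne_zero])
  · -- `x ↦ ∏ c ∈ T, (x - c) ^ 2` is positive on the finitely many values `≤ t`
    obtain ⟨m, hm, hmT⟩ := (hvals.inter_of_left (Iic t)).isCompact.exists_forall_le'
      (f := fun x => ∏ c ∈ T, (x - c) ^ 2) (by fun_prop : Continuous _).continuousOn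
      fun x hx => Finset.prod_pos fun c hc =>
        sq_pos_of_neg (sub_neg.2 (hx.2.trans_lt (Finset.mem_filter.1 hc).2))
    exact ⟨m, hm, fun z hz hle => (heval z).symm ▸ hmT _ ⟨⟨z, hz, rfl⟩, hle⟩⟩

theorem exists_eval_eq_zero_on_and_pos_lower_bound_on [Fintype σ] {O B : Set (σ → ℝ)}
    (hO : O.Finite) (hB : IsClosed B) (hOB : Disjoint O B) :
    ∃ D : MvPolynomial σ ℝ, (∀ u ∈ O, eval u D = 0) ∧ ∃ δ > 0, ∀ z ∈ B, δ ≤ eval z D := by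
  classical
  let D := ∏ u ∈ hO.toFinset, ∑ j, (X j - C (u j)) ^ 2
  have heval : ∀ z, eval z D = ∏ u ∈ hO.toFinset, ∑ j, (z j - u j) ^ 2 := by
    simp [D]
  refine ⟨D, fun u hu => ?_, ?_⟩
  · rw [heval]
    exact Finset.prod_eq_zero (hO.mem_toFinset.2 hu) (by simp)
  · refine hB.exists_pos_forall_le_of_cocompact D.continuous_eval one_pos ?_ fun z hz => ?_
    · have hdist : ∀ u, ∀ᶠ z in cocompact (σ → ℝ), 1 ≤ dist z u := fun u =>
        (tendsto_dist_right_cocompact_atTop u).eventually_ge_atTop 1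
      filter_upwards [(eventually_all_finset _).2 fun u _ => hdist u] with z hz
      rw [heval]
      exact Finset.one_le_prod fun u hu =>
        (one_le_pow₀ (hz u hu)).trans (dist_sq_le_sum_sq_sub z u)
    · rw [heval]
      refine Finset.prod_pos fun u hu => ?_
      have hzu : z ≠ u := fun h => hOB.ne_of_mem (hO.mem_toFinset.1 hu) hz h.symm
      obtain ⟨j, hj⟩ := Function.ne_iff.1 hzu
      exact Finset.sum_pos' (fun j _ => sq_nonneg _)
        ⟨j, Finset.mem_univ j, sq_pos_of_ne_zero (sub_ne_zero.2 hj)⟩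

theorem exists_eval_pos_of_lt_and_mem_of_eval_nonneg [Fintype σ] {V O : Set (σ → ℝ)}
    {F : MvPolynomial σ ℝ} {t : ℝ} (hV : IsClosed V)
    (hvals : ((fun z => eval z F) '' V).Finite) (hO : O.Finite)
    (hiso : ∀ u ∈ O, ∃ U, IsOpen U ∧ u ∈ U ∧ U ∩ {z | z ∈ V ∧ eval z F = t} = {u}) :
    ∃ q : MvPolynomial σ ℝ, (∀ z ∈ V, t < eval z F → 0 < eval z q) ∧
      (∀ u ∈ O, 0 < eval u q) ∧ ∀ z ∈ V, 0 ≤ eval z q → eval z F ≤ t → z ∈ O := by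
  obtain ⟨G, hG_zero, m, hm, hmG⟩ :=
    exists_eval_eq_zero_of_lt_and_pos_lower_bound_of_le hvals t
  obtain ⟨D, hD_zero, δ, hδ, hδD⟩ := exists_eval_eq_zero_on_and_pos_lower_bound_on hO
    (isClosed_setOf_le_and_notMem hV F.continuous_eval hvals hiso)
    (disjoint_right.2 fun z hz => hz.2.2)
  -- `G * D` vanishes where `q` must be positive and is at least `m * δ` where it must not be
  refine ⟨C (m * δ / 2) - G * D, fun z hz hlt => ?_, fun u hu => ?_, fun z hz hq hle => ?_⟩
  · simp only [map_sub, map_mul, eval_C, hG_zero z hz hlt, zero_mul, sub_zero]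
    positivity
  · simp only [map_sub, map_mul, eval_C, hD_zero u hu, mul_zero, sub_zero]
    positivity
  · by_contra hzO
    have hGD : m * δ ≤ eval z G * eval z D :=
      mul_le_mul (hmG z hz hle) (hδD z ⟨hz, hle, hzO⟩) hδ.le (hm.le.trans (hmG z hz hle))
    simp only [map_sub, map_mul, eval_C, sub_nonneg] at hq
    linarith [mul_pos hm hδ]

end MvPolynomial

theorem stmt10_general (N r s : ℕ)
    (φ : Fin r → MvPolynomial (Fin N) ℝ) (ψ : Fin s → MvPolynomial (Fin N) ℝ)
    (F : MvPolynomial (Fin N) ℝ) (fstar : ℝ) (O : Set (Fin N → ℝ))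
    (hvals : {v : ℝ | ∃ z : Fin N → ℝ, (∀ i, eval z (φ i) = 0) ∧ eval z F = v}.Finite)
    (hlb : ∀ z : Fin N → ℝ, ((∀ i, eval z (φ i) = 0) ∧ ∀ j, 0 ≤ eval z (ψ j)) →
      fstar ≤ eval z F)
    (hO : O = {z : Fin N → ℝ |
      ((∀ i, eval z (φ i) = 0) ∧ ∀ j, 0 ≤ eval z (ψ j)) ∧ eval z F = fstar})
    (hOfin : O.Finite) (hOne : O.Nonempty)
    (hiso : ∀ u ∈ O, ∃ U : Set (Fin N → ℝ), IsOpen U ∧ u ∈ U ∧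
      U ∩ {z : Fin N → ℝ | (∀ i, eval z (φ i) = 0) ∧ eval z F = fstar} = {u}) :
    ∃ q : MvPolynomial (Fin N) ℝ,
      (∀ z : Fin N → ℝ, ((∀ i, eval z (φ i) = 0) ∧ ∀ j, 0 ≤ eval z (ψ j)) →
        0 < eval z q) ∧
      (∀ z : Fin N → ℝ, (∀ i, eval z (φ i) = 0) → 0 ≤ eval z q → fstar ≤ eval z F) ∧
      (∃ z : Fin N → ℝ, (∀ i, eval z (φ i) = 0) ∧ 0 ≤ eval z q ∧ eval z F = fstar) ∧
      {z : Fin N → ℝ | ((∀ i, eval z (φ i) = 0) ∧ 0 ≤ eval z q) ∧ eval z F = fstar} = O := by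
  have hV : IsClosed {z : Fin N → ℝ | ∀ i, eval z (φ i) = 0} := by
    simp only [ofPred_forall]
    exact isClosed_iInter fun i => isClosed_eq (φ i).continuous_eval continuous_const
  obtain ⟨q, hq_gt, hq_O, hq_mem⟩ :=
    exists_eval_pos_of_lt_and_mem_of_eval_nonneg hV hvals hOfin hiso
  have hq_feas : ∀ z, ((∀ i, eval z (φ i) = 0) ∧ ∀ j, 0 ≤ eval z (ψ j)) → 0 < eval z q :=
    fun z hz => (hlb z hz).lt_or_eq.elim (hq_gt z hz.1) fun h => hq_O z (hO ▸ ⟨hz, h.symm⟩)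
  refine ⟨q, hq_feas, fun z hz hq => ?_, ?_, ?_⟩
  · by_contra! hlt
    have hzO := hq_mem z hz hq hlt.le
    rw [hO] at hzO
    exact hlt.ne hzO.2
  · obtain ⟨u, hu⟩ := hOne
    rw [hO] at hu
    exact ⟨u, hu.1.1, (hq_feas u hu.1).le, hu.2⟩
  · ext z
    refine ⟨fun ⟨⟨hz, hq⟩, hF⟩ => hq_mem z hz hq hF.le, fun hz => ?_⟩
    rw [hO] at hz
    exact ⟨⟨hz.1.1, (hq_feas z hz.1).le⟩, hz.2⟩

/-- If `F` attains only finitely many values on `V = {φ = 0}`, the problem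
`min F s.t. φ = 0, ψ ≥ 0` has minimum value `f*` attained exactly on the finite set `O`
of minimizers, each of which is an isolated point of `{z : φ(z) = 0, F(z) = f*}`, then
there is a polynomial `q` such that: (a) `q > 0` on the feasible set; (b) the minimum
of `F` over `{φ = 0, q ≥ 0}` equals `f*`; (c) the set of minimizers of `F` over
`{φ = 0, q ≥ 0}` is exactly `O`. -/
theorem stmt10 (N r s : ℕ)
    (φ : Fin r → MvPolynomial (Fin N) ℝ) (ψ : Fin s → MvPolynomial (Fin N) ℝ)
    (F : MvPolynomial (Fin N) ℝ) (fstar : ℝ) (O : Set (Fin N → ℝ))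
    (hvals : {v : ℝ | ∃ z : Fin N → ℝ, (∀ i, eval z (φ i) = 0) ∧ eval z F = v}.Finite)
    (hfeas : {z : Fin N → ℝ | (∀ i, eval z (φ i) = 0) ∧ ∀ j, 0 ≤ eval z (ψ j)}.Nonempty)
    (hlb : ∀ z : Fin N → ℝ, ((∀ i, eval z (φ i) = 0) ∧ ∀ j, 0 ≤ eval z (ψ j)) →
      fstar ≤ eval z F)
    (hO : O = {z : Fin N → ℝ |
      ((∀ i, eval z (φ i) = 0) ∧ ∀ j, 0 ≤ eval z (ψ j)) ∧ eval z F = fstar})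
    (hOfin : O.Finite) (hOne : O.Nonempty)
    (hiso : ∀ u ∈ O, ∃ U : Set (Fin N → ℝ), IsOpen U ∧ u ∈ U ∧
      U ∩ {z : Fin N → ℝ | (∀ i, eval z (φ i) = 0) ∧ eval z F = fstar} = {u}) :
    ∃ q : MvPolynomial (Fin N) ℝ,
      (∀ z : Fin N → ℝ, ((∀ i, eval z (φ i) = 0) ∧ ∀ j, 0 ≤ eval z (ψ j)) →
        0 < eval z q) ∧
      (∀ z : Fin N → ℝ, (∀ i, eval z (φ i) = 0) → 0 ≤ eval z q → fstar ≤ eval z F) ∧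
      (∃ z : Fin N → ℝ, (∀ i, eval z (φ i) = 0) ∧ 0 ≤ eval z q ∧ eval z F = fstar) ∧
      {z : Fin N → ℝ | ((∀ i, eval z (φ i) = 0) ∧ 0 ≤ eval z q) ∧ eval z F = fstar} = O :=
  stmt10_general N r s φ ψ F fstar O hvals hlb hO hOfin hOne hiso
end
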